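/- Let Δt > 0 and Δx > 0. The following are equivalent: (i) for every θ ∈ ℝ, every complex root z of z² − z + (Δt/Δx²)·sin²θ satisfies |z| ≤ 1; (ii) Δt ≤ Δx². -/

import Mathlib

/-- Von Neumann stability of the limit scheme: all roots of
`z² − z + (Δt/Δx²) sin²θ` lie in the closed unit disc for every `θ` iff `Δt ≤ Δx²`. -/
theorem stmt_5 (Δt Δx : ℝ) (hΔt : 0 < Δt) (hΔx : 0 < Δx) :
    (∀ θ : ℝ, ∀ z : ℂ,
        z ^ 2 - z + ((Δt / Δx ^ 2 * Real.sin θ ^ 2 : ℝ) : ℂ) = 0 → ‖z‖ ≤ 1) ↔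
      Δt ≤ Δx ^ 2 := by
  have hx2 : (0:ℝ) < Δx ^ 2 := by positivity
  set c : ℝ := Δt / Δx ^ 2 with hc
  have hc0 : 0 < c := by positivity
  constructor
  · intro h
    by_contra hlt
    push_neg at hlt
    have hc1 : 1 < c := (one_lt_div hx2).mpr hlt
    set s : ℝ := Real.sqrt (4 * c - 1) with hsdef
    have hs : s ^ 2 = 4 * c - 1 := Real.sq_sqrt (by nlinarith)
    set z : ℂ := ⟨1/2, s/2⟩ with hzdef
    have hcoef : (c * Real.sin (Real.pi / 2) ^ 2 : ℝ) = c := by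
      rw [Real.sin_pi_div_two]; ring
    have heq : z ^ 2 - z + ((c * Real.sin (Real.pi / 2) ^ 2 : ℝ) : ℂ) = 0 := by
      rw [hcoef]
      apply Complex.ext <;>
        simp [hzdef, pow_two, Complex.mul_re, Complex.mul_im] <;> nlinarith
    have habs := h (Real.pi / 2) z heq
    have h2 : ‖z‖ ^ 2 = c := by
      rw [Complex.sq_norm, Complex.normSq_apply]
      simp [hzdef]
      nlinarith
    nlinarith [norm_nonneg z]
  · intro h θ z hz
    have hc1 : c ≤ 1 := (div_le_one hx2).mpr h
    set a : ℝ := c * Real.sin θ ^ 2 with ha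
    have ha0 : 0 ≤ a := by positivity
    have ha1 : a ≤ 1 := by nlinarith [Real.sin_sq_le_one θ, sq_nonneg (Real.sin θ)]
    have hre := congrArg Complex.re hz
    have him := congrArg Complex.im hz
    simp [pow_two, Complex.mul_re, Complex.mul_im] at hre him
    set x := z.re
    set y := z.im
    have hcase : y = 0 ∨ x = 1/2 := by
      rcases mul_eq_zero.mp (show y * (2 * x - 1) = 0 by nlinarith) with h' | h'
      · exact Or.inl h'
      · exact Or.inr (by linarith)
    have h2 : ‖z‖ ^ 2 ≤ 1 := by
      rw [Complex.sq_norm, Complex.normSq_apply]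
      show x * x + y * y ≤ 1
      rcases hcase with h' | h' <;> rw [h'] at hre <;> rw [h'] <;> nlinarith
    nlinarith [norm_nonneg z]
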